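/- arXiv:1806.07598 — 2 statements merged into one kernel-verified Lean document; each statement's English description precedes it below -/
import Mathlib

section
/- Let n be a natural number and let a : Fin (n+1) → WithTop ℝ and σ : Fin (n+1) → List (Option ℝ) be a level structure, with final values F defined by F 0 = a 0 and F (i+1) = min (List.foldl step (F i) (σ (i+1))) (a (i+1)). Suppose a n ≠ ⊤ and: (i) for every i < n with a i ≠ ⊤ there exists j with i < j ≤ n such that none occurs in σ j; and (ii) for every j ≤ n and every occurrence of some p in σ j, either a none occurs at a strictly later position of σ j, or there exists j' with j < j' ≤ n such that none occurs in σ j'. Then F n = a n. -/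
/-- A signal acting on the (possibly absent) priority of a fixed key:
`none` is a Delete signal (result `⊤`, i.e. no entry), `some p` is an
Update signal with priority `p` (result `min x ↑p`). -/
noncomputable def step (x : WithTop ℝ) : Option ℝ → WithTop ℝ
  | none => ⊤
  | some p => min x ↑p

private lemma foldl_split (x : WithTop ℝ) (l₁ l₂ : List (Option ℝ)) :
    List.foldl step x (l₁ ++ none :: l₂) = List.foldl step ⊤ l₂ := by
  rw [List.foldl_append]
  rfl

private lemma last_none (l : List (Option ℝ)) (h : none ∈ l) :
    ∃ l₁ l₂, l = l₁ ++ none :: l₂ ∧ none ∉ l₂ := by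
  induction l with
  | nil => simp at h
  | cons hd tl ih =>
    by_cases h' : none ∈ tl
    · obtain ⟨l₁, l₂, rfl, hn⟩ := ih h'
      exact ⟨hd :: l₁, l₂, rfl, hn⟩
    · have hhd : hd = none := by
        rcases List.mem_cons.mp h with h | h
        · exact h.symm
        · exact absurd h h'
      exact ⟨[], tl, by simp [hhd], h'⟩

private lemma buffer_analysis (l : List (Option ℝ)) (D : Prop)
    (h : ∀ l₁ l₂ : List (Option ℝ), ∀ p : ℝ, l = l₁ ++ some p :: l₂ → none ∈ l₂ ∨ D)
    (x : WithTop ℝ) :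
    l = [] ∨ List.foldl step x l = ⊤ ∨ D := by
  by_cases hn : none ∈ l
  · obtain ⟨l₁, l₂, rfl, hnl⟩ := last_none l hn
    rcases l₂ with _ | ⟨o, l₂'⟩
    · right; left; rw [foldl_split]; rfl
    · match o with
      | none => exact absurd (by simp) hnl
      | some p =>
        rcases h (l₁ ++ [none]) l₂' p (by simp) with h' | h'
        · exact absurd (List.mem_cons_of_mem _ h') hnl
        · right; right; exact h'
  · rcases l with _ | ⟨o, tl⟩
    · left; rfl
    · match o with
      | none => exact absurd (by simp) hn
      | some p =>
        rcases h [] tl p rfl with h' | h'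
        · exact absurd (List.mem_cons_of_mem _ h') hn
        · right; right; exact h'

theorem stmt_9 (n : ℕ)
    (a : Fin (n + 1) → WithTop ℝ) (σ : Fin (n + 1) → List (Option ℝ))
    (F : Fin (n + 1) → WithTop ℝ)
    (hF0 : F 0 = a 0)
    (hFs : ∀ i : Fin n,
      F i.succ = min (List.foldl step (F i.castSucc) (σ i.succ)) (a i.succ))
    (htop : a (Fin.last n) ≠ ⊤)
    (h1 : ∀ i : Fin (n + 1), i < Fin.last n → a i ≠ ⊤ →
      ∃ j : Fin (n + 1), i < j ∧ j ≤ Fin.last n ∧ none ∈ σ j)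
    (h2 : ∀ j : Fin (n + 1), ∀ l₁ l₂ : List (Option ℝ), ∀ p : ℝ,
      σ j = l₁ ++ some p :: l₂ →
        none ∈ l₂ ∨ ∃ j' : Fin (n + 1), j < j' ∧ j' ≤ Fin.last n ∧ none ∈ σ j') :
    F (Fin.last n) = a (Fin.last n) := by
  -- Key invariant: below the root, the final value is either ⊤ or there is a
  -- pending Delete signal strictly above.
  have Q : ∀ m : ℕ, (hm : m < n) → F ⟨m, by omega⟩ = ⊤ ∨
      ∃ j : Fin (n + 1), m < (j : ℕ) ∧ j ≤ Fin.last n ∧ none ∈ σ j := by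
    intro m
    induction m with
    | zero =>
      intro hm
      by_cases ha : a 0 = ⊤
      · left
        have : (⟨0, by omega⟩ : Fin (n + 1)) = 0 := rfl
        rw [this, hF0]; exact ha
      · right
        obtain ⟨j, hj1, hj2, hj3⟩ := h1 0 (by
          simp [Fin.lt_def, Fin.last]; omega) ha
        exact ⟨j, by have := Fin.lt_def.mp hj1; rwa [Fin.val_zero] at this, hj2, hj3⟩
    | succ m ih =>
      intro hm
      have hmn : m < n := by omega
      set i : Fin n := ⟨m, hmn⟩ with hi
      have hFe := hFs i
      -- the later-delete property
      set D : Prop := ∃ j : Fin (n + 1), m + 1 < (j : ℕ) ∧ j ≤ Fin.last n ∧ none ∈ σ j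
        with hD
      have hAn := buffer_analysis (σ i.succ) D (by
        intro l₁ l₂ p hl
        rcases h2 i.succ l₁ l₂ p hl with h' | ⟨j', hj1, hj2, hj3⟩
        · exact Or.inl h'
        · exact Or.inr ⟨j', by simpa [Fin.lt_def, i] using hj1, hj2, hj3⟩)
        (F i.castSucc)
      have hsucc : i.succ = (⟨m + 1, by omega⟩ : Fin (n + 1)) := rfl
      rcases hAn with hA | hA | hA
      · -- empty buffer at level m+1
        rw [hA] at hFe
        simp only [List.foldl_nil] at hFe
        rcases ih hmn with hT | ⟨j, hj1, hj2, hj3⟩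
        · have hcast : F i.castSucc = ⊤ := hT
          rw [hcast, min_eq_right le_top] at hFe
          by_cases ha : a i.succ = ⊤
          · left; rw [← hsucc, hFe]; exact ha
          · right
            obtain ⟨j, hj1, hj2, hj3⟩ := h1 i.succ (by
              simp [Fin.lt_def, Fin.last, i]; omega) ha
            exact ⟨j, by simpa [Fin.lt_def, i] using hj1, hj2, hj3⟩
        · right
          refine ⟨j, ?_, hj2, hj3⟩
          rcases Nat.lt_or_ge (m + 1) (j : ℕ) with h' | h'
          · exact h'
          · exfalso
            have hje : j = i.succ := by
              apply Fin.ext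
              simp only [Fin.val_succ, hi]
              omega
            rw [hje, hA] at hj3
            simp at hj3
      · -- fold is ⊤
        rw [hA, min_eq_right le_top] at hFe
        by_cases ha : a i.succ = ⊤
        · left; rw [← hsucc, hFe]; exact ha
        · right
          obtain ⟨j, hj1, hj2, hj3⟩ := h1 i.succ (by
            simp [Fin.lt_def, Fin.last, i]; omega) ha
          exact ⟨j, by simpa [Fin.lt_def, i] using hj1, hj2, hj3⟩
      · exact Or.inr hA
  rcases Nat.eq_zero_or_pos n with hn | hn
  · subst hn
    have h0 : (Fin.last 0 : Fin 1) = 0 := rfl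
    rw [h0, hF0]
  · set i : Fin n := ⟨n - 1, by omega⟩ with hi
    have hsucc : i.succ = Fin.last n := by
      apply Fin.ext
      simp [Fin.last, hi]
      omega
    have hFe := hFs i
    rw [hsucc] at hFe
    have hAn := buffer_analysis (σ (Fin.last n)) False (by
      intro l₁ l₂ p hl
      rcases h2 (Fin.last n) l₁ l₂ p hl with h' | ⟨j', hj1, hj2, hj3⟩
      · exact Or.inl h'
      · exact absurd hj1 (not_lt.mpr hj2)) (F i.castSucc)
    rcases hAn with hA | hA | hA
    · rw [hA] at hFe
      simp only [List.foldl_nil] at hFe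
      rcases Q (n - 1) (by omega) with hT | ⟨j, hj1, hj2, hj3⟩
      · have hcast : F i.castSucc = ⊤ := hT
        rw [hcast, min_eq_right le_top] at hFe
        exact hFe
      · exfalso
        have hje : j = Fin.last n := by
          apply Fin.ext
          have := Fin.le_def.mp hj2
          simp only [Fin.val_last] at this ⊢
          omega
        rw [hje, hA] at hj3
        simp at hj3
    · rw [hA, min_eq_right le_top] at hFe
      exact hFe
    · exact hA.elim
end

section
/- Let n be a natural number and let a : Fin (n+1) → WithTop ℝ and σ : Fin (n+1) → List (Option ℝ) be a level structure, with final values F defined by F 0 = a 0 and F (i+1) = min (List.foldl step (F i) (σ (i+1))) (a (i+1)). Let β : WithTop ℝ. If for every i ≤ n one has β ≤ a i, and for every i ≤ n and every occurrence of some p in σ i one has β ≤ ↑p, then β ≤ F n. -/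
lemma foldl_step_ge (β : WithTop ℝ) : ∀ (l : List (Option ℝ)) (x : WithTop ℝ),
    β ≤ x → (∀ p : ℝ, some p ∈ l → β ≤ (↑p : WithTop ℝ)) →
    β ≤ List.foldl step x l
  | [], x, hx, _ => hx
  | (o :: l), x, hx, hl => by
    apply foldl_step_ge β l
    · cases o with
      | none => exact le_top
      | some p => exact le_min hx (hl p (by simp))
    · intro p hp; exact hl p (List.mem_cons_of_mem _ hp)

theorem stmt_10 (n : ℕ)
    (a : Fin (n + 1) → WithTop ℝ) (σ : Fin (n + 1) → List (Option ℝ))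
    (F : Fin (n + 1) → WithTop ℝ)
    (hF0 : F 0 = a 0)
    (hFs : ∀ i : Fin n,
      F i.succ = min (List.foldl step (F i.castSucc) (σ i.succ)) (a i.succ))
    (β : WithTop ℝ)
    (ha : ∀ i : Fin (n + 1), β ≤ a i)
    (hσ : ∀ i : Fin (n + 1), ∀ p : ℝ, some p ∈ σ i → β ≤ (↑p : WithTop ℝ)) :
    β ≤ F (Fin.last n) := by
  have h : ∀ i : Fin (n + 1), β ≤ F i := by
    intro i
    induction i using Fin.induction with
    | zero => rw [hF0]; exact ha 0
    | succ j ih =>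
      rw [hFs j]
      exact le_min (foldl_step_ge β _ _ ih (hσ j.succ)) (ha j.succ)
  exact h (Fin.last n)
end
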